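/- For all integers n ≥ k ≥ 0 and a commutative ℚ-algebra element a, the coefficient of t^n in (1−t)^{−a}·(t/(1−t))^k/k!, multiplied by n!, equals C(n,k)·(a+k)^{(n−k)}, where x^{(m)} is the rising factorial. -/

import Mathlib

/-! Since `t/(1−t) = t · (1−t)⁻¹` and `(1−t)^{−a} · (1−t)⁻¹ = (1−t)^{−(a+1)}` (coefficientwise the
telescoping identity `Σ_{m≤M} a⁽ᵐ⁾/m! = (a+1)⁽ᴹ⁾/M!`), the series equals `tᵏ (1−t)^{−(a+k)} / k!`,
whose `n`-th coefficient is `(a+k)⁽ⁿ⁻ᵏ⁾ / ((n−k)! k!)`. -/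

open PowerSeries

variable {R : Type*}

/-- The binomial series `(1−t)^{−a} = Σ_{m≥0} a⁽ᵐ⁾ tᵐ/m!`. -/
noncomputable def binomSeries [CommRing R] [Algebra ℚ R] (a : R) : PowerSeries R :=
  PowerSeries.mk fun m => ((m.factorial : ℚ)⁻¹) • (ascPochhammer R m).eval a

/-- The series `t/(1−t) = Σ_{n≥1} tⁿ`. -/
noncomputable def geomSeries [CommRing R] : PowerSeries R :=
  PowerSeries.mk fun n => if n = 0 then 0 else 1

theorem coeff_binomSeries [CommRing R] [Algebra ℚ R] (a : R) (m : ℕ) :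
    coeff m (binomSeries a) = ((m.factorial : ℚ)⁻¹) • (ascPochhammer R m).eval a := by
  simp [binomSeries]

open Polynomial in
theorem sum_range_succ_coeff_binomSeries [CommRing R] [Algebra ℚ R] (a : R) (M : ℕ) :
    ∑ m ∈ Finset.range (M + 1), coeff m (binomSeries a) = coeff M (binomSeries (a + 1)) := by
  induction M with
  | zero => simp [coeff_binomSeries]
  | succ M ih =>
    rw [Finset.sum_range_succ, ih]
    simp only [coeff_binomSeries]
    have hfact : ((M.factorial : ℚ))⁻¹ = ((M + 1).factorial : ℚ)⁻¹ * (M + 1) := by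
      rw [Nat.factorial_succ]
      push_cast
      field_simp
    have hleft : (ascPochhammer R (M + 1)).eval a = a * (ascPochhammer R M).eval (a + 1) := by
      simp [ascPochhammer_succ_left, eval_comp]
    rw [hfact, mul_smul, ← smul_add, hleft, ascPochhammer_succ_eval M (a + 1)]
    congr 1
    rw [Algebra.smul_def]
    push_cast
    ring

theorem binomSeries_mul_mk_one [CommRing R] [Algebra ℚ R] (a : R) :
    binomSeries a * mk 1 = binomSeries (a + 1) := by
  ext n
  rw [coeff_mul, Finset.Nat.sum_antidiagonal_eq_sum_range_succ_mk,
    ← sum_range_succ_coeff_binomSeries]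
  simp

theorem geomSeries_eq_X_mul_mk_one [CommRing R] : (geomSeries : PowerSeries R) = X * mk 1 := by
  ext (_ | n) <;> simp [geomSeries, coeff_succ_X_mul]

theorem binomSeries_mul_geomSeries_pow [CommRing R] [Algebra ℚ R] (a : R) (k : ℕ) :
    binomSeries a * geomSeries ^ k = X ^ k * binomSeries (a + k) := by
  induction k with
  | zero => simp
  | succ k ih =>
    rw [pow_succ, ← mul_assoc, ih, geomSeries_eq_X_mul_mk_one, mul_left_comm, mul_assoc,
      binomSeries_mul_mk_one, ← mul_assoc, ← pow_succ', Nat.cast_succ, add_assoc]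

/-- For `0 ≤ k ≤ n`:
`n! · [tⁿ] ((1−t)^{−a}·(t/(1−t))^k/k!) = C(n,k)·(a+k)^{(n−k)}`,
identifying the generalized Jacobi–Rogers polynomials for Euler's continued
fraction of rising powers. -/
theorem jacobiRogers_risingPowers [CommRing R] [Algebra ℚ R] (a : R)
    (n k : ℕ) (hk : k ≤ n) :
    (n.factorial : R) *
      PowerSeries.coeff n
        (binomSeries a * geomSeries ^ k * PowerSeries.C (algebraMap ℚ R ((k.factorial : ℚ)⁻¹))) =
    (n.choose k : R) * (ascPochhammer R (n - k)).eval (a + (k : R)) := by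
  rw [coeff_mul_C, binomSeries_mul_geomSeries_pow, coeff_X_pow_mul', if_pos hk,
    coeff_binomSeries]
  have hchoose :
      (n.choose k : ℚ) = n.factorial * ((n - k).factorial : ℚ)⁻¹ * (k.factorial : ℚ)⁻¹ := by
    rw [Nat.cast_choose ℚ hk]
    field_simp
  rw [Algebra.smul_def, ← map_natCast (algebraMap ℚ R) (n.choose k), hchoose]
  simp only [map_mul, map_natCast]
  ring
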